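/- arXiv:2512.07635 — 3 statements merged into one kernel-verified Lean document; each statement's English description precedes it below -/
import Mathlib

section
/- Let X and Y be ℂ-vector spaces, f : X → Y a linear map, and A ⊆ X a nonempty disked set. Then f(A) ⊆ Y is a nonempty disked set, and the seminormed space Y_{f(A)} is isometrically isomorphic to the quotient seminormed space X_A / (ker f ∩ X_A). -/
open Filter Set Pointwise

structure VectorBornology (X : Type) [AddCommGroup X] [Module ℂ X] : Type where
  IsBounded : Set X → Prop
  isBounded_singleton : ∀ x : X, IsBounded {x}
  isBounded_union : ∀ {A B : Set X}, IsBounded A → IsBounded B → IsBounded (A ∪ B)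
  isBounded_subset : ∀ {A B : Set X}, A ⊆ B → IsBounded B → IsBounded A
  isBounded_add : ∀ {A B : Set X}, IsBounded A → IsBounded B → IsBounded (A + B)
  isBounded_smul : ∀ {S : Set ℂ} {A : Set X}, Bornology.IsBounded S → IsBounded A →
      IsBounded (Set.image2 (fun (c : ℂ) (x : X) => c • x) S A)

variable {X : Type} [AddCommGroup X] [Module ℂ X]

/-- A disked set: balanced and convex. -/
def IsDisked (A : Set X) : Prop := Balanced ℂ A ∧ Convex ℝ A

/-- The disked hull: the smallest balanced convex set containing `A`. -/
def diskedHull (A : Set X) : Set X := ⋂₀ {B : Set X | A ⊆ B ∧ IsDisked B}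

/-- Minkowski seminorm `p_B` associated with a (disked) set `B`. -/
noncomputable def gaugeB (B : Set X) (x : X) : ℝ := sInf {t : ℝ | 0 < t ∧ x ∈ t • B}

namespace VectorBornology

/-- A bornology is convex if it has a basis of convex sets. -/
def IsConvex (bv : VectorBornology X) : Prop :=
  ∀ A : Set X, bv.IsBounded A → ∃ B : Set X, bv.IsBounded B ∧ Convex ℝ B ∧ A ⊆ B

/-- Bornological convergence of a net. -/
def ConvergesTo (bv : VectorBornology X) {ι : Type} [Preorder ι] (x : ι → X) (a : X) : Prop :=
  ∃ B : Set X, bv.IsBounded B ∧ ∃ t : ι → ℝ,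
    Tendsto t atTop (nhds (0 : ℝ)) ∧ ∀ i, x i - a ∈ t i • B

/-- Bornological Cauchy net. -/
def CauchyNet (bv : VectorBornology X) {ι : Type} [Preorder ι] (x : ι → X) : Prop :=
  ∃ B : Set X, bv.IsBounded B ∧ ∃ t : ι × ι → ℝ,
    Tendsto t atTop (nhds (0 : ℝ)) ∧ ∀ p : ι × ι, x p.1 - x p.2 ∈ t p • B

/-- Bornologically closed set. -/
def IsBornClosed (bv : VectorBornology X) (A : Set X) : Prop :=
  ∀ (ι : Type) [Preorder ι] [Nonempty ι] [IsDirected ι (· ≤ ·)],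
    ∀ (x : ι → X) (a : X), (∀ i, x i ∈ A) → bv.ConvergesTo x a → a ∈ A

/-- Separated: `{0}` is the only bounded linear subspace. -/
def IsSeparated (bv : VectorBornology X) : Prop :=
  ∀ E : Submodule ℂ X, bv.IsBounded (E : Set X) → E = ⊥

/-- Bornologically complete: every bornological Cauchy net converges bornologically. -/
def IsBComplete (bv : VectorBornology X) : Prop :=
  ∀ (ι : Type) [Preorder ι] [Nonempty ι] [IsDirected ι (· ≤ ·)],
    ∀ x : ι → X, bv.CauchyNet x → ∃ a : X, bv.ConvergesTo x a

/-- `𝔅` is a basis of the bornology `bv`. -/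
def IsBasisOf (bv : VectorBornology X) (𝔅 : Set (Set X)) : Prop :=
  (∀ B ∈ 𝔅, bv.IsBounded B) ∧ ∀ A : Set X, bv.IsBounded A → ∃ B ∈ 𝔅, A ⊆ B

end VectorBornology

/-- Convergence of a net lying in `X_B = span ℂ B` with respect to the seminorm `p_B`. -/
def SeminormTendsto (B : Set X) {ι : Type} [Preorder ι] (x : ι → X) (a : X) : Prop :=
  (∀ i, x i ∈ Submodule.span ℂ B) ∧ a ∈ Submodule.span ℂ B ∧
    Tendsto (fun i => gaugeB B (x i - a)) atTop (nhds (0 : ℝ))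

/-- Cauchyness of a net lying in `X_B = span ℂ B` with respect to the seminorm `p_B`. -/
def SeminormCauchy (B : Set X) {ι : Type} [Preorder ι] (x : ι → X) : Prop :=
  (∀ i, x i ∈ Submodule.span ℂ B) ∧
    ∀ ε : ℝ, 0 < ε → ∃ i₀ : ι, ∀ i j : ι, i₀ ≤ i → i₀ ≤ j → gaugeB B (x i - x j) < ε

/-- `p_B` is a norm on `X_B`. -/
def IsNormOn (B : Set X) : Prop :=
  ∀ x : X, x ∈ Submodule.span ℂ B → gaugeB B x = 0 → x = 0

/-- `B` is completant: `X_B` with `p_B` is a Banach space. -/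
def Completant (B : Set X) : Prop :=
  IsNormOn B ∧ ∀ x : ℕ → X, SeminormCauchy B x → ∃ a : X, SeminormTendsto B x a
/-
Every `x ∈ X_A` lies in some `t • A` with `t > 0`, because `⋃_{t>0} t • A` is a submodule
(convexity gives `s • A + t • A = (s + t) • A`, balancedness absorbs complex scalars).
For `y ∈ ker f`, `x - y ∈ t • A` gives `f x ∈ t • f(A)`; conversely `f x = t • f a` with
`a ∈ A` makes `y := x - t • a` an element of `ker f ∩ X_A` with `x - y ∈ t • A`. So the scales
admitted by `f x` for `f(A)` are exactly those admitted by the cosets `x - y`, and the infima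
agree. Since `gaugeB` is definitionally Mathlib's `gauge`, the `gauge` API applies to it.
-/

lemma IsDisked.image {Y : Type} [AddCommGroup Y] [Module ℂ Y] {A : Set X} (hA : IsDisked A)
    (f : X →ₗ[ℂ] Y) : IsDisked (f '' A) :=
  ⟨fun c hc => by rw [← image_smul_set]; exact image_mono (hA.1 c hc),
    hA.2.linear_image (f.restrictScalars ℝ)⟩

lemma IsDisked.exists_pos_mem_smul_of_mem_span {A : Set X} (hne : A.Nonempty) (hA : IsDisked A)
    {x : X} (hx : x ∈ Submodule.span ℂ A) : ∃ t : ℝ, 0 < t ∧ x ∈ t • A := by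
  induction hx using Submodule.span_induction with
  | mem a ha => exact ⟨1, one_pos, by rwa [one_smul]⟩
  | zero => exact ⟨1, one_pos, by rw [one_smul]; exact hA.1.zero_mem hne⟩
  | add x y _ _ hx hy =>
    obtain ⟨s, hs, hx⟩ := hx
    obtain ⟨t, ht, hy⟩ := hy
    exact ⟨s + t, add_pos hs ht, hA.2.add_smul hs.le ht.le ▸ add_mem_add hx hy⟩
  | smul c x _ hx =>
    obtain ⟨t, ht, hx⟩ := hx
    refine ⟨t * (‖c‖ + 1), by positivity, hA.1.smul_mono (a := t • c) ?_ ?_⟩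
    · rw [norm_smul, Real.norm_of_nonneg ht.le, Real.norm_of_nonneg (by positivity)]
      gcongr
      linarith
    · rw [smul_assoc, smul_comm]
      exact smul_mem_smul_set hx

lemma gauge_image_le {E F : Type*} [AddCommGroup E] [Module ℝ E] [AddCommGroup F] [Module ℝ F]
    (f : E →ₗ[ℝ] F) {A : Set E} {x : E} (hx : ∃ t : ℝ, 0 < t ∧ x ∈ t • A) :
    gauge (f '' A) (f x) ≤ gauge A x :=
  le_csInf hx fun t ⟨ht, hxt⟩ =>
    gauge_le_of_mem ht.le (image_smul_set f t A ▸ mem_image_of_mem f hxt)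

lemma LinearMap.exists_mem_ker_sub_mem_smul {Y : Type} [AddCommGroup Y] [Module ℂ Y]
    (f : X →ₗ[ℂ] Y) {A : Set X} {x : X} (hx : x ∈ Submodule.span ℂ A) {t : ℝ}
    (hfx : f x ∈ t • f '' A) :
    ∃ y ∈ LinearMap.ker f, y ∈ Submodule.span ℂ A ∧ x - y ∈ t • A := by
  obtain ⟨_, ⟨a, ha, rfl⟩, hfa⟩ := hfx
  refine ⟨x - t • a, ?_, ?_, ?_⟩
  · rw [LinearMap.mem_ker, map_sub, f.map_smul_of_tower, ← hfa, sub_self]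
  · exact sub_mem hx (Submodule.smul_of_tower_mem _ t (Submodule.subset_span ha))
  · rw [sub_sub_cancel]
    exact smul_mem_smul_set ha

theorem stmt_4 {Y : Type} [AddCommGroup Y] [Module ℂ Y]
    (f : X →ₗ[ℂ] Y) (A : Set X) (hne : A.Nonempty) (hA : IsDisked A) :
    (f '' A).Nonempty ∧ IsDisked (f '' A) ∧
    Submodule.map f (Submodule.span ℂ A) = Submodule.span ℂ (f '' A) ∧
    ∀ x : X, x ∈ Submodule.span ℂ A →
      gaugeB (f '' A) (f x) =
        sInf {r : ℝ | ∃ y : X, y ∈ LinearMap.ker f ∧ y ∈ Submodule.span ℂ A ∧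
          r = gaugeB A (x - y)} := by
  refine ⟨hne.image f, hA.image f, (Submodule.span_image f).symm, fun x hx => ?_⟩
  apply le_antisymm
  · refine le_csInf ⟨_, 0, zero_mem _, zero_mem _, rfl⟩ ?_
    rintro _ ⟨y, hy, hyA, rfl⟩
    rw [← sub_zero (f x), ← LinearMap.mem_ker.mp hy, ← map_sub]
    exact gauge_image_le (f.restrictScalars ℝ)
      (hA.exists_pos_mem_smul_of_mem_span hne (sub_mem hx hyA))
  · obtain ⟨t₀, ht₀, hxt₀⟩ := hA.exists_pos_mem_smul_of_mem_span hne hx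
    have hfxt₀ : f x ∈ t₀ • f '' A := image_smul_set (f.restrictScalars ℝ) t₀ A ▸ ⟨x, hxt₀, rfl⟩
    have hbdd : BddBelow {r : ℝ | ∃ y : X, y ∈ LinearMap.ker f ∧ y ∈ Submodule.span ℂ A ∧
        r = gaugeB A (x - y)} := ⟨0, by rintro _ ⟨_, _, _, rfl⟩; exact gauge_nonneg _⟩
    refine le_csInf ⟨t₀, ht₀, hfxt₀⟩ fun t ⟨ht, hfx⟩ => ?_
    obtain ⟨y, hy, hyA, hxy⟩ := f.exists_mem_ker_sub_mem_smul hx hfx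
    exact (csInf_le hbdd ⟨y, hy, hyA, rfl⟩).trans (gauge_le_of_mem ht.le hxy)
end

section
/- Let (X_λ, f_{λμ}) be an inductive system of convex bornological vector spaces with all transition maps f_{λμ} injective. (1) If each X_λ is separated, then the inductive limit colim X_λ with the inductive limit bornology is separated. (2) If each X_λ is complete and separated, then colim X_λ is complete and separated. -/
open Filter Set Pointwise

variable {X : Type} [AddCommGroup X] [Module ℂ X]

/-
Because the canonical maps `ι_λ` are injective, a bounded set of the inductive limit sits inside
`ι_λ(B)` for a single bounded disk `B ⊆ X_λ`, and `ι_λ` identifies `B` with that image.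
A bounded subspace of the limit is therefore the image of a bounded subspace of `X_λ`, hence zero.
A bornological Cauchy net, after subtracting one of its terms, is the image of a Cauchy net of
`X_λ`; its limit there, enlarged to a bounded disk by convexity, gives the limit in `colim X_λ`.
-/

theorem Balanced.convexHull_real {s : Set X} (hs : Balanced ℂ s) :
    Balanced ℂ (convexHull ℝ s) := by
  intro a ha
  have hsmul : a • convexHull ℝ s = convexHull ℝ (a • s) :=
    LinearMap.image_convexHull (DistribSMul.toLinearMap ℝ X a) s
  exact hsmul.subset.trans (convexHull_mono (hs a ha))

section

variable {Y : Type} [AddCommGroup Y] [Module ℂ Y]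

namespace LinearMap

theorem image_real_smul_set (g : X →ₗ[ℂ] Y) (t : ℝ) (B : Set X) :
    g '' (t • B) = t • g '' B :=
  image_smul_set (g.restrictScalars ℝ) t B

theorem real_smul_image_subset_range (g : X →ₗ[ℂ] Y) (t : ℝ) (B : Set X) :
    t • g '' B ⊆ LinearMap.range g :=
  image_real_smul_set g t B ▸ Set.image_subset_range g _

theorem mem_real_smul_image_iff {g : X →ₗ[ℂ] Y} (hg : Function.Injective g) {t : ℝ} {B : Set X}
    {x : X} : g x ∈ t • g '' B ↔ x ∈ t • B := by
  rw [← image_real_smul_set]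
  exact hg.mem_set_image

end LinearMap

namespace VectorBornology

theorem exists_isDisked_superset (bv : VectorBornology X) (hcv : bv.IsConvex) {A : Set X}
    (hA : bv.IsBounded A) : ∃ D : Set X, D.Nonempty ∧ bv.IsBounded D ∧ IsDisked D ∧ A ⊆ D := by
  set A₀ := balancedHull ℂ (insert 0 A)
  have hA₀ : bv.IsBounded A₀ := by
    refine bv.isBounded_subset ?_ (bv.isBounded_smul (Metric.isBounded_closedBall (x := 0) (r := 1))
      (Set.insert_eq (0 : X) A ▸ bv.isBounded_union (bv.isBounded_singleton 0) hA))
    intro x hx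
    obtain ⟨r, hr, y, hy, rfl⟩ := mem_balancedHull_iff.1 hx
    exact ⟨r, by simpa using hr, y, hy, rfl⟩
  obtain ⟨C, hC, hCconv, hA₀C⟩ := hcv A₀ hA₀
  refine ⟨convexHull ℝ A₀, ⟨0, subset_convexHull ℝ _ (subset_balancedHull ℂ (mem_insert 0 A))⟩,
    bv.isBounded_subset (convexHull_min hA₀C hCconv) hC,
    ⟨(balancedHull.balanced _).convexHull_real, convex_convexHull ℝ _⟩,
    (subset_insert 0 A).trans ((subset_balancedHull ℂ).trans (subset_convexHull ℝ _))⟩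

theorem IsSeparated.eq_bot_of_subset_image {bx : VectorBornology X} (hsep : bx.IsSeparated)
    {g : X →ₗ[ℂ] Y} (hg : Function.Injective g) {B : Set X} (hB : bx.IsBounded B)
    {E : Submodule ℂ Y} (hE : (E : Set Y) ⊆ g '' B) : E = ⊥ := by
  have hrange : E ≤ LinearMap.range g := fun y hy => by
    obtain ⟨x, -, rfl⟩ := hE hy
    exact ⟨x, rfl⟩
  have hcomap : E.comap g = ⊥ :=
    hsep _ (bx.isBounded_subset (fun x hx => hg.mem_set_image.1 (hE hx)) hB)
  rw [← Submodule.map_comap_eq_self hrange, hcomap, Submodule.map_bot]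

theorem IsBComplete.exists_tendsto_of_cauchy_image {bx : VectorBornology X}
    (hc : bx.IsBComplete) {g : X →ₗ[ℂ] Y} (hg : Function.Injective g)
    {I : Type} [Preorder I] [Nonempty I] [IsDirected I (· ≤ ·)] {x : I → Y}
    {B : Set X} (hB : bx.IsBounded B) {t : I × I → ℝ} (ht : Tendsto t atTop (nhds 0))
    (hx : ∀ p : I × I, x p.1 - x p.2 ∈ t p • g '' B) :
    ∃ a : Y, ∃ C : Set X, bx.IsBounded C ∧ ∃ s : I → ℝ,
      Tendsto s atTop (nhds 0) ∧ ∀ i, x i - a ∈ s i • g '' C := by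
  obtain ⟨i₀⟩ := ‹Nonempty I›
  choose y hy using fun i => g.real_smul_image_subset_range _ B (hx (i, i₀))
  have hcauchy : bx.CauchyNet y := by
    refine ⟨B, hB, t, ht, fun p => (g.mem_real_smul_image_iff hg).1 ?_⟩
    rw [map_sub, hy, hy, sub_sub_sub_cancel_right]
    exact hx p
  obtain ⟨a, C, hC, s, hs, hya⟩ := hc I y hcauchy
  refine ⟨x i₀ + g a, C, hC, s, hs, fun i => ?_⟩
  have hdiff : x i - (x i₀ + g a) = g (y i - a) := by
    rw [map_sub, hy]
    abel
  exact hdiff ▸ (g.mem_real_smul_image_iff hg).2 (hya i)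

end VectorBornology

end

theorem stmt_13_general
    {Λ : Type}
    (Xf : Λ → Type) [∀ l, AddCommGroup (Xf l)] [∀ l, Module ℂ (Xf l)]
    (b : ∀ l, VectorBornology (Xf l)) (hcv : ∀ l, (b l).IsConvex)
    (Y : Type) [AddCommGroup Y] [Module ℂ Y]
    (ι : ∀ l, Xf l →ₗ[ℂ] Y)
    (hι_inj : ∀ l, Function.Injective (ι l))
    (bq : VectorBornology Y)
    (hbq : ∀ S : Set Y, bq.IsBounded S ↔
      ∃ (l : Λ) (B : Set (Xf l)), B.Nonempty ∧ (b l).IsBounded B ∧ IsDisked B ∧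
        S ⊆ ι l '' B) :
    ((∀ l, (b l).IsSeparated) → bq.IsSeparated) ∧
    ((∀ l, (b l).IsSeparated ∧ (b l).IsBComplete) → bq.IsSeparated ∧ bq.IsBComplete) := by
  have sep : (∀ l, (b l).IsSeparated) → bq.IsSeparated := fun hs E hE => by
    obtain ⟨l, B, -, hB, -, hEB⟩ := (hbq _).1 hE
    exact (hs l).eq_bot_of_subset_image (hι_inj l) hB hEB
  refine ⟨sep, fun h => ⟨sep fun l => (h l).1, ?_⟩⟩
  rintro I _ _ _ x ⟨B, hB, t, ht, hx⟩
  obtain ⟨l, B₀, -, hB₀, -, hBB₀⟩ := (hbq B).1 hB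
  obtain ⟨a, C, hC, s, hs, hxa⟩ := (h l).2.exists_tendsto_of_cauchy_image (hι_inj l) hB₀ ht
    fun p => smul_set_mono hBB₀ (hx p)
  obtain ⟨D, hDne, hD, hDdisk, hCD⟩ := (b l).exists_isDisked_superset (hcv l) hC
  exact ⟨a, ι l '' D, (hbq _).2 ⟨l, D, hDne, hD, hDdisk, subset_rfl⟩, s, hs,
    fun i => smul_set_mono (image_mono hCD) (hxa i)⟩

theorem stmt_13
    {Λ : Type} [Preorder Λ] [IsDirected Λ (· ≤ ·)] [Nonempty Λ]
    (Xf : Λ → Type) [∀ l, AddCommGroup (Xf l)] [∀ l, Module ℂ (Xf l)]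
    (b : ∀ l, VectorBornology (Xf l)) (hcv : ∀ l, (b l).IsConvex)
    (f : ∀ l m : Λ, l ≤ m → (Xf l →ₗ[ℂ] Xf m))
    (hf_id : ∀ (l : Λ) (h : l ≤ l) (x : Xf l), f l l h x = x)
    (hf_comp : ∀ (l m k : Λ) (h1 : l ≤ m) (h2 : m ≤ k) (x : Xf l),
      f m k h2 (f l m h1 x) = f l k (h1.trans h2) x)
    (hf_inj : ∀ (l m : Λ) (h : l ≤ m), Function.Injective (f l m h))
    (hf_bdd : ∀ (l m : Λ) (h : l ≤ m) (A : Set (Xf l)),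
      (b l).IsBounded A → (b m).IsBounded (f l m h '' A))
    (Y : Type) [AddCommGroup Y] [Module ℂ Y]
    (ι : ∀ l, Xf l →ₗ[ℂ] Y)
    (hι_comp : ∀ (l m : Λ) (h : l ≤ m) (x : Xf l), ι m (f l m h x) = ι l x)
    (hι_inj : ∀ l, Function.Injective (ι l))
    (hι_sur : ∀ y : Y, ∃ (l : Λ) (x : Xf l), ι l x = y)
    (bq : VectorBornology Y)
    (hbq : ∀ S : Set Y, bq.IsBounded S ↔
      ∃ (l : Λ) (B : Set (Xf l)), B.Nonempty ∧ (b l).IsBounded B ∧ IsDisked B ∧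
        S ⊆ ι l '' B) :
    ((∀ l, (b l).IsSeparated) → bq.IsSeparated) ∧
    ((∀ l, (b l).IsSeparated ∧ (b l).IsBComplete) → bq.IsSeparated ∧ bq.IsBComplete) :=
  stmt_13_general Xf b hcv Y ι hι_inj bq hbq
end

section
/- Let L be a Lie conformal algebra. Then Lie(L) := (ℂ[t,t⁻¹] ⊗ L)/Im(∂_t ⊗ id + id ⊗ T) with bracket [f⊗a, g⊗b] := Σ_{n≥0} (1/n!)(∂_t^n f)g ⊗ a_{(n)}b (well-defined on the quotient) is a Lie algebra; writing a_{[m]} for the class of t^m ⊗ a, the bracket satisfies [a_{[m]}, b_{[n]}] = Σ_{j≥0} C(m,j) (a_{(j)}b)_{[m+n−j]}. -/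
open Finset

/-- A Lie conformal algebra over `ℂ`, presented through the coefficients
`a_(n) b` of the λ-bracket `[a_λ b] = Σ_{n≥0} (λ^n/n!) a_(n) b`. -/
structure LieConformalAlgebra (L : Type) [AddCommGroup L] [Module ℂ L] where
  /-- the translation operator -/
  T : L →ₗ[ℂ] L
  /-- the `n`-th product `a_(n) b` -/
  prod : ℕ → L →ₗ[ℂ] L →ₗ[ℂ] L
  /-- local finiteness: `[a_λ b]` is polynomial in `λ` -/
  locfin : ∀ a b : L, ∃ N : ℕ, ∀ n ≥ N, prod n a b = 0
  /-- sesquilinearity `[Ta_λ b] = -λ [a_λ b]`, coefficient of `λ^0` -/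
  sesqui_zero : ∀ a b : L, prod 0 (T a) b = 0
  /-- sesquilinearity `[Ta_λ b] = -λ [a_λ b]`, higher coefficients -/
  sesqui : ∀ (n : ℕ) (a b : L), prod (n + 1) (T a) b = (-((n : ℂ) + 1)) • prod n a b
  /-- skew-symmetry `[b_λ a] = -[a_{-λ-T} b]`, in coefficients:
  `b_(n) a = -Σ_j ((-1)^{n+j}/j!) T^j (a_(n+j) b)` -/
  skew : ∀ (n : ℕ) (a b : L) (N : ℕ), (∀ j ≥ N, prod (n + j) a b = 0) →
      prod n b a =
        -∑ j ∈ Finset.range N,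
            (((-1 : ℂ) ^ (n + j)) * ((Nat.factorial j : ℂ))⁻¹) •
              ((⇑T)^[j] (prod (n + j) a b))
  /-- the Jacobi identity `[a_λ [b_μ c]] = [[a_λ b]_{λ+μ} c] + [b_μ [a_λ c]]`,
  in coefficients of `λ^n μ^m / (n! m!)` -/
  jacobi : ∀ (n m : ℕ) (a b c : L),
      prod n a (prod m b c) =
        (∑ i ∈ Finset.range (n + 1),
            (Nat.choose n i : ℂ) • prod (m + i) (prod (n - i) a b) c) +
          prod m b (prod n a c)

/-- A `2`-cocycle `ω_λ : L ⊗ L → ℂ[λ]` of a Lie conformal algebra, presented through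
the coefficients `ω_(n)(a,b)` of `ω_λ(a,b) = Σ_{n≥0} (λ^n/n!) ω_(n)(a,b)`. -/
structure LieConformalTwoCocycle {L : Type} [AddCommGroup L] [Module ℂ L]
    (P : LieConformalAlgebra L) where
  /-- the coefficient `ω_(n)` -/
  ω : ℕ → L →ₗ[ℂ] L →ₗ[ℂ] ℂ
  locfin : ∀ a b : L, ∃ N : ℕ, ∀ n ≥ N, ω n a b = 0
  /-- `ω_λ(Ta, b) = -λ ω_λ(a, b)` -/
  sesqui_zero : ∀ a b : L, ω 0 (P.T a) b = 0
  sesqui : ∀ (n : ℕ) (a b : L), ω (n + 1) (P.T a) b = (-((n : ℂ) + 1)) * ω n a b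
  /-- `ω_λ(b, a) = -ω_{-λ}(a, b)` -/
  skew : ∀ (n : ℕ) (a b : L), ω n b a = -(((-1 : ℂ) ^ n) * ω n a b)
  /-- `ω_λ(a, [b_μ c]) = ω_{λ+μ}([a_λ b], c) + ω_μ(b, [a_λ c])` in coefficients -/
  jacobi : ∀ (n m : ℕ) (a b c : L),
      ω n a (P.prod m b c) =
        (∑ i ∈ Finset.range (n + 1),
            (Nat.choose n i : ℂ) * ω (m + i) (P.prod (n - i) a b) c) +
          ω m b (P.prod n a c)
variable {L : Type} [AddCommGroup L] [Module ℂ L]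

/-- The image of `∂_t ⊗ id + id ⊗ T` inside `ℂ[t,t⁻¹] ⊗ L`, modelled as `ℤ →₀ L`
(the coefficient at `m` being that of `t^m`): it is spanned by the elements
`∂_t(t^m) ⊗ a + t^m ⊗ Ta = m t^{m-1} ⊗ a + t^m ⊗ Ta`. -/
noncomputable def lieRel (P : LieConformalAlgebra L) : Submodule ℂ (ℤ →₀ L) :=
  Submodule.span ℂ {x : ℤ →₀ L | ∃ (m : ℤ) (a : L),
    x = Finsupp.single (m - 1) ((m : ℂ) • a) + Finsupp.single m (P.T a)}

/-- `Lie(L) = (ℂ[t,t⁻¹] ⊗ L)/Im(∂_t ⊗ id + id ⊗ T)`. -/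
abbrev LieQuot (P : LieConformalAlgebra L) := (ℤ →₀ L) ⧸ lieRel P

/-- `a_{[m]}`, the class of `t^m ⊗ a`. -/
noncomputable def cls (P : LieConformalAlgebra L) (m : ℤ) (a : L) : LieQuot P :=
  Submodule.Quotient.mk (Finsupp.single m a)

/-- The binomial coefficient `C(m, j)` for `m ∈ ℤ`, `j ∈ ℕ`, as a complex number. -/
noncomputable def intChoose (m : ℤ) (j : ℕ) : ℂ :=
  (∏ i ∈ Finset.range j, ((m : ℂ) - (i : ℂ))) / (Nat.factorial j : ℂ)

/-!
Define `[a_{[m]}, b_{[n]}] = Σ_j C(m,j) (a_{(j)}b)_{[m+n-j]}` on `ℤ →₀ L` and check that it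
descends to the quotient and satisfies the Lie algebra axioms there. In the quotient `T` acts as
`-∂_t`, i.e. `(Ta)_{[m]} = -m a_{[m-1]}`, so `(T^i a)_{[m]} = (-1)^i i! C(m,i) a_{[m-i]}`.
With this, sesquilinearity and the absorption identity `m C(m-1,j) = (j+1) C(m,j+1)` kill the
bracket on the relations; conformal skew-symmetry becomes skew-symmetry through
`Σ_{p+j=q} (-1)^p C(n,p) C(m+n-p,j) = C(m,q)`; and the conformal Jacobi identity becomes the
Jacobi identity after the substitutions `r = t + i`, `u = s + i`, using trinomial revision
`C(k,t+i) C(t+i,i) = C(k,t) C(k-t,i)` and Chu–Vandermonde. All sums are finite by local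
finiteness, with truncation bounds taken along `atTop`.
-/

theorem Finset.sum_range_sum_range_eq_sum_antidiagonal {M : Type*} [AddCommMonoid M] {N : ℕ}
    {f : ℕ → ℕ → M} (hf : ∀ p q, N ≤ p + q → f p q = 0) :
    ∑ p ∈ range N, ∑ q ∈ range N, f p q = ∑ n ∈ range N, ∑ x ∈ antidiagonal n, f x.1 x.2 := by
  rw [← sum_product', sum_sigma']
  refine sum_bij_ne_zero (fun x _ _ => ⟨x.1 + x.2, x⟩) ?_ ?_ ?_ (fun _ _ _ => rfl)
  · intro x _ hx
    simpa using not_le.1 fun h => hx (hf _ _ h)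
  · intro x _ _ y _ _ h
    exact (Sigma.mk.inj_iff.1 h).2.eq
  · rintro ⟨n, x⟩ hx hfx
    simp only [mem_sigma, mem_range, HasAntidiagonal.mem_antidiagonal] at hx
    exact ⟨x, by simp only [mem_product, mem_range]; omega, hfx, by simp [hx.2]⟩

open Filter

theorem eventually_atTop_forall_le_add_apply_eq_zero {β γ : Type*} [Zero β] [Zero γ]
    {F : ℕ → β → γ} (hF₀ : ∀ j, F j 0 = 0) (hF : ∀ x, ∀ᶠ j in atTop, F j x = 0)
    {g : ℕ → β} (hg : ∀ᶠ s in atTop, g s = 0) :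
    ∀ᶠ N in atTop, ∀ j s, N ≤ j + s → F j (g s) = 0 := by
  obtain ⟨B, hB⟩ := eventually_atTop.1 hg
  obtain ⟨A, hA⟩ := eventually_atTop.1 <|
    (eventually_all_finset (range B)).2 fun s _ => hF (g s)
  filter_upwards [eventually_ge_atTop (A + B)] with N hN j s hjs
  by_cases hs : s < B
  · exact hA j (by omega) s (mem_range.2 hs)
  · rw [hB s (not_lt.1 hs), hF₀]

namespace LinearMap

variable {ι R M N Q : Type*} [CommSemiring R] [AddCommMonoid M] [AddCommMonoid N]
  [AddCommMonoid Q] [Module R M] [Module R N] [Module R Q]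

noncomputable def finsum₂ (f : ι → M →ₗ[R] N →ₗ[R] Q)
    (hf : ∀ x y, (fun i => f i x y).HasFiniteSupport) : M →ₗ[R] N →ₗ[R] Q :=
  mk₂ R (fun x y => ∑ᶠ i, f i x y)
    (fun x x' y => by simp only [map_add, add_apply]; exact finsum_add_distrib (hf _ _) (hf _ _))
    (fun c x y => by simp only [map_smul, smul_apply]; exact (smul_finsum' c (hf _ _)).symm)
    (fun x y y' => by simp only [map_add]; exact finsum_add_distrib (hf _ _) (hf _ _))
    (fun c x y => by simp only [map_smul]; exact (smul_finsum' c (hf _ _)).symm)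

end LinearMap

open Polynomial in
theorem intChoose_eq_choose (m : ℤ) (j : ℕ) : intChoose m j = Ring.choose (m : ℂ) j := by
  rw [Ring.choose_eq_smul, ← aeval_eq_smeval, aeval_def, ← eval_map, descPochhammer_map,
    descPochhammer_eval_eq_prod_range, intChoose, smul_eq_mul, div_eq_inv_mul]

theorem intChoose_zero_right (m : ℤ) : intChoose m 0 = 1 := by
  simp [intChoose]

theorem mul_intChoose_sub_one (m : ℤ) (j : ℕ) :
    (m : ℂ) * intChoose (m - 1) j = (j + 1) * intChoose m (j + 1) := by
  have := Ring.choose_smul_choose (m : ℂ) (Nat.le_add_left 1 j)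
  simp only [intChoose_eq_choose, Int.cast_sub, Int.cast_one]
  simpa [Ring.choose_one_right, nsmul_eq_mul, eq_comm] using this

theorem intChoose_add (x y : ℤ) (n : ℕ) :
    intChoose (x + y) n = ∑ p ∈ antidiagonal n, intChoose x p.1 * intChoose y p.2 := by
  simp only [intChoose_eq_choose, Int.cast_add]
  exact Ring.add_choose_eq n (Commute.all _ _)

theorem intChoose_add_mul_choose (x : ℤ) (t i : ℕ) :
    intChoose x (t + i) * (t + i).choose i = intChoose x t * intChoose (x - t) i := by
  have := Ring.choose_smul_choose (x : ℂ) (Nat.le_add_right t i)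
  rw [Nat.add_sub_cancel_left, Nat.choose_symm_add, nsmul_eq_mul] at this
  simp only [intChoose_eq_choose, Int.cast_sub, Int.cast_natCast]
  rw [mul_comm, this]

theorem intChoose_eq_neg_one_pow_mul (x : ℤ) (k : ℕ) :
    intChoose x k = (-1) ^ k * intChoose (k - x - 1) k := by
  have := Ring.choose_neg (-(x : ℂ)) k
  rw [neg_neg, Units.smul_def, zsmul_eq_mul, Int.cast_negOnePow, zpow_natCast] at this
  simp only [intChoose_eq_choose, this]
  push_cast
  ring_nf

/- Upper negation turns `C(m+n-p, j)` into `(-1)^j C(q-m-n-1, j)`, whose upper index no longer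
depends on `p`; then Chu–Vandermonde and upper negation once more. -/
theorem sum_antidiagonal_neg_one_pow_mul_intChoose (m n : ℤ) (q : ℕ) :
    ∑ x ∈ antidiagonal q, (-1) ^ x.1 * intChoose n x.1 * intChoose (m + n - x.1) x.2 =
      intChoose m q := by
  have key : ∀ x ∈ antidiagonal q, (-1) ^ x.1 * intChoose n x.1 * intChoose (m + n - x.1) x.2 =
      (-1) ^ q * (intChoose n x.1 * intChoose (q - m - n - 1) x.2) := by
    intro x hx
    rw [HasAntidiagonal.mem_antidiagonal] at hx
    rw [intChoose_eq_neg_one_pow_mul (m + n - x.1), ← hx]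
    push_cast
    ring_nf
  rw [sum_congr rfl key, ← mul_sum, ← intChoose_add, intChoose_eq_neg_one_pow_mul m]
  ring_nf

section Reindexing

variable {V : Type*} [AddCommGroup V] [Module ℂ V]

theorem sum_range_sum_range_neg_one_pow_intChoose_smul (m n : ℤ) {N : ℕ} {g : ℕ → V}
    (hg : ∀ q ≥ N, g q = 0) :
    ∑ p ∈ range N, ∑ j ∈ range N,
        ((-1) ^ p * intChoose n p * intChoose (m + n - p) j) • g (p + j) =
      ∑ q ∈ range N, intChoose m q • g q := by
  rw [sum_range_sum_range_eq_sum_antidiagonal fun p j h => by rw [hg _ h, smul_zero]]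
  refine sum_congr rfl fun q _ => ?_
  rw [← sum_antidiagonal_neg_one_pow_mul_intChoose m n q, sum_smul]
  refine sum_congr rfl fun x hx => ?_
  rw [HasAntidiagonal.mem_antidiagonal.1 hx]

theorem sum_range_sum_range_sum_choose_intChoose_smul (k m : ℤ) {N : ℕ} {g : ℕ → ℕ → V}
    (hg : ∀ t u, N ≤ t + u → g t u = 0) :
    ∑ r ∈ range N, ∑ s ∈ range N, ∑ i ∈ range (r + 1),
        (intChoose k r * intChoose m s * r.choose i) • g (r - i) (s + i) =
      ∑ t ∈ range N, ∑ u ∈ range N, (intChoose k t * intChoose (k + m - t) u) • g t u := by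
  calc _ = ∑ r ∈ range N, ∑ x ∈ antidiagonal r, ∑ s ∈ range N,
          (intChoose k (x.1 + x.2) * intChoose m s * (x.1 + x.2).choose x.1) •
            g x.2 (s + x.1) := by
        refine sum_congr rfl fun r _ => ?_
        rw [sum_comm, Nat.sum_antidiagonal_eq_sum_range_succ
          (fun i t => ∑ s ∈ range N,
            (intChoose k (i + t) * intChoose m s * (i + t).choose i) • g t (s + i))]
        refine sum_congr rfl fun i hi => ?_
        rw [Nat.add_sub_cancel' (Nat.lt_succ_iff.1 (mem_range.1 hi))]
    _ = ∑ i ∈ range N, ∑ t ∈ range N, ∑ s ∈ range N,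
          (intChoose k (i + t) * intChoose m s * (i + t).choose i) • g t (s + i) := by
        symm
        refine sum_range_sum_range_eq_sum_antidiagonal fun i t h => ?_
        exact sum_eq_zero fun s _ => by rw [hg _ _ (by omega), smul_zero]
    _ = ∑ t ∈ range N, ∑ i ∈ range N, ∑ s ∈ range N,
          (intChoose k t * (intChoose (k - t) i * intChoose m s)) • g t (i + s) := by
        rw [sum_comm]
        refine sum_congr rfl fun t _ => sum_congr rfl fun i _ => sum_congr rfl fun s _ => ?_
        rw [add_comm i t, add_comm s i, mul_right_comm, intChoose_add_mul_choose]
        ring_nf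
    _ = ∑ t ∈ range N, ∑ u ∈ range N, ∑ x ∈ antidiagonal u,
          (intChoose k t * (intChoose (k - t) x.1 * intChoose m x.2)) • g t u := by
        refine sum_congr rfl fun t _ => ?_
        rw [sum_range_sum_range_eq_sum_antidiagonal fun i s h => by
          rw [hg _ _ (by omega), smul_zero]]
        refine sum_congr rfl fun u _ => sum_congr rfl fun x hx => ?_
        rw [HasAntidiagonal.mem_antidiagonal.1 hx]
    _ = _ := by
        refine sum_congr rfl fun t _ => sum_congr rfl fun u _ => ?_
        rw [← sum_smul, ← mul_sum, ← intChoose_add, sub_add_eq_add_sub, add_comm k m]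

end Reindexing

namespace LieConformalAlgebra

variable (P : LieConformalAlgebra L)

theorem eventually_prod_eq_zero (a b : L) : ∀ᶠ j in atTop, P.prod j a b = 0 :=
  eventually_atTop.2 (P.locfin a b)

theorem eventually_prod_prod_eq_zero (a b c : L) :
    ∀ᶠ N in atTop, ∀ r s, N ≤ r + s → P.prod r a (P.prod s b c) = 0 :=
  eventually_atTop_forall_le_add_apply_eq_zero (fun _ => map_zero _)
    (P.eventually_prod_eq_zero a) (P.eventually_prod_eq_zero b c)

theorem eventually_prod_prod_left_eq_zero (a b c : L) :
    ∀ᶠ N in atTop, ∀ u t, N ≤ u + t → P.prod u (P.prod t a b) c = 0 :=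
  eventually_atTop_forall_le_add_apply_eq_zero (F := fun u x => P.prod u x c)
    (fun _ => by simp) (fun x => P.eventually_prod_eq_zero x c) (P.eventually_prod_eq_zero a b)

variable {P}

theorem prod_swap_eq_zero {a b : L} {N : ℕ} (h : ∀ j ≥ N, P.prod j a b = 0) :
    ∀ j ≥ N, P.prod j b a = 0 := by
  intro j hj
  simpa using P.skew j a b 0 fun i _ => h (j + i) (by omega)

theorem prod_T_eq_zero {a b : L} {N : ℕ} (h : ∀ j ≥ N, P.prod j a b = 0) :
    ∀ j ≥ N + 1, P.prod j (P.T a) b = 0 := by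
  rintro (_ | j) hj
  · omega
  · rw [P.sesqui, h j (by omega), smul_zero]

end LieConformalAlgebra

section Classes

variable {P : LieConformalAlgebra L}

variable (P) in
noncomputable def lcls (m : ℤ) : L →ₗ[ℂ] LieQuot P :=
  (lieRel P).mkQ ∘ₗ Finsupp.lsingle m

@[simp]
theorem cls_zero (m : ℤ) : cls P m 0 = 0 :=
  map_zero (lcls P m)

@[simp]
theorem cls_add (m : ℤ) (a b : L) : cls P m (a + b) = cls P m a + cls P m b :=
  map_add (lcls P m) a b

@[simp]
theorem cls_neg (m : ℤ) (a : L) : cls P m (-a) = -cls P m a :=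
  map_neg (lcls P m) a

@[simp]
theorem cls_smul (m : ℤ) (c : ℂ) (a : L) : cls P m (c • a) = c • cls P m a :=
  map_smul (lcls P m) c a

@[simp]
theorem cls_sum {ι : Type*} (s : Finset ι) (m : ℤ) (f : ι → L) :
    cls P m (∑ i ∈ s, f i) = ∑ i ∈ s, cls P m (f i) :=
  map_sum (lcls P m) f s

theorem LieQuot.induction_on {motive : LieQuot P → Prop} (x : LieQuot P)
    (cls : ∀ m a, motive (cls P m a)) (add : ∀ x y, motive x → motive y → motive (x + y)) :
    motive x := by
  induction x using Submodule.Quotient.induction_on with | H x => ?_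
  induction x using Finsupp.induction_linear with
  | zero => simpa using cls 0 0
  | add x y hx hy => exact add _ _ hx hy
  | single m a => exact cls m a

theorem cls_T (m : ℤ) (a : L) : cls P m (P.T a) = -((m : ℂ) • cls P (m - 1) a) := by
  rw [eq_neg_iff_add_eq_zero, add_comm, ← cls_smul, cls, cls, ← Submodule.Quotient.mk_add,
    Submodule.Quotient.mk_eq_zero]
  exact Submodule.subset_span ⟨m, a, rfl⟩

theorem cls_T_iterate (m : ℤ) (i : ℕ) (a : L) :
    cls P m (P.T^[i] a) = ((-1) ^ i * i.factorial * intChoose m i) • cls P (m - i) a := by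
  induction i generalizing m with
  | zero => simp [intChoose_zero_right]
  | succ i ih =>
    rw [Function.iterate_succ_apply', cls_T, ih, smul_smul, ← neg_smul, sub_sub,
      add_comm (1 : ℤ), ← Nat.cast_succ]
    congr 1
    rw [Nat.factorial_succ]
    push_cast
    linear_combination (-(-1) ^ i * i.factorial : ℂ) * mul_intChoose_sub_one m i

theorem cls_prod_swap (m : ℤ) (p : ℕ) {a b : L} {N : ℕ}
    (h : ∀ j ≥ N, P.prod (p + j) a b = 0) :
    cls P m (P.prod p b a) =
      -∑ j ∈ range N, ((-1) ^ p * intChoose m j) • cls P (m - j) (P.prod (p + j) a b) := by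
  rw [P.skew p a b N h, cls_neg, cls_sum]
  congr 1
  refine sum_congr rfl fun j _ => ?_
  rw [cls_smul, cls_T_iterate, smul_smul]
  congr 1
  have hf : (j.factorial : ℂ) ≠ 0 := Nat.cast_ne_zero.2 j.factorial_ne_zero
  have hj : ((-1 : ℂ) ^ j) ^ 2 = 1 := by rw [← pow_mul, pow_mul']; simp
  field_simp
  linear_combination (-1 : ℂ) ^ p * intChoose m j * hj

end Classes

section ModeBracket

variable (P : LieConformalAlgebra L)

/-- `[a_{[m]}, b_{[n]}] = Σ_j C(m,j) (a_{(j)}b)_{[m+n-j]}` before passing to the quotient. -/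
noncomputable def modeBracket (m n : ℤ) : L →ₗ[ℂ] L →ₗ[ℂ] LieQuot P :=
  LinearMap.finsum₂ (fun j : ℕ => intChoose m j • (P.prod j).compr₂ (lcls P (m + n - j)))
    fun a b => by
      have h := Nat.cofinite_eq_atTop ▸ P.eventually_prod_eq_zero a b
      refine (eventually_cofinite.1 h).subset ?_
      intro j hj (hj' : P.prod j a b = 0)
      simp [hj'] at hj

variable {P}

theorem modeBracket_eq_sum (m n : ℤ) {a b : L} {N : ℕ} (h : ∀ j ≥ N, P.prod j a b = 0) :
    modeBracket P m n a b = ∑ j ∈ range N, intChoose m j • cls P (m + n - j) (P.prod j a b) := by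
  refine finsum_eq_sum_of_support_subset _ fun j hj => ?_
  by_contra hjN
  exact hj (by simp [h j (by simpa using hjN)])

theorem modeBracket_swap (m n : ℤ) (a b : L) :
    modeBracket P n m b a = -modeBracket P m n a b := by
  obtain ⟨N, h⟩ := P.locfin a b
  rw [modeBracket_eq_sum n m (P.prod_swap_eq_zero h), modeBracket_eq_sum m n h,
    ← sum_range_sum_range_neg_one_pow_intChoose_smul m n
      (g := fun q => cls P (m + n - q) (P.prod q a b)) fun q hq => by simp [h q hq],
    ← sum_neg_distrib]
  refine sum_congr rfl fun p _ => ?_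
  rw [cls_prod_swap (N := N) _ p fun j hj => h (p + j) (by omega), smul_neg, smul_sum, neg_inj]
  refine sum_congr rfl fun j _ => ?_
  rw [smul_smul, add_comm n m]
  push_cast
  ring_nf

theorem modeBracket_T_left (m n : ℤ) (a b : L) :
    (m : ℂ) • modeBracket P (m - 1) n a b + modeBracket P m n (P.T a) b = 0 := by
  obtain ⟨N, h⟩ := P.locfin a b
  rw [modeBracket_eq_sum (m - 1) n h, modeBracket_eq_sum m n (P.prod_T_eq_zero h),
    sum_range_succ', P.sesqui_zero, cls_zero, smul_zero, add_zero, smul_sum,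
    ← sum_add_distrib]
  refine sum_eq_zero fun j _ => ?_
  rw [P.sesqui, cls_smul, smul_smul, smul_smul,
    show m + n - ((j + 1 : ℕ) : ℤ) = m - 1 + n - j by push_cast; ring, ← add_smul]
  convert zero_smul ℂ _
  linear_combination mul_intChoose_sub_one m j

end ModeBracket

section Bracket

variable (P : LieConformalAlgebra L)

noncomputable def preBracket : (ℤ →₀ L) →ₗ[ℂ] (ℤ →₀ L) →ₗ[ℂ] LieQuot P :=
  Finsupp.lsum ℂ fun m => (Finsupp.lsum ℂ fun n => (modeBracket P m n).flip).flip

theorem preBracket_single (m n : ℤ) (a b : L) :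
    preBracket P (Finsupp.single m a) (Finsupp.single n b) = modeBracket P m n a b := by
  simp [preBracket]

theorem preBracket_swap (x y : ℤ →₀ L) : preBracket P y x = -preBracket P x y := by
  suffices (preBracket P).flip = -preBracket P from LinearMap.congr_fun₂ this x y
  ext m a n b
  simp only [LinearMap.comp_apply, LinearMap.flip_apply, LinearMap.neg_apply,
    Finsupp.lsingle_apply, preBracket_single]
  exact modeBracket_swap m n a b

theorem lieRel_le_ker_preBracket : lieRel P ≤ LinearMap.ker (preBracket P) := by
  refine Submodule.span_le.2 ?_
  rintro _ ⟨m, a, rfl⟩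
  rw [SetLike.mem_coe, LinearMap.mem_ker]
  ext n b
  simp [preBracket_single, modeBracket_T_left]

noncomputable def bracket : LieQuot P →ₗ[ℂ] LieQuot P →ₗ[ℂ] LieQuot P :=
  LinearMap.IsRefl.liftQ₂ (preBracket P) (lieRel P)
    (fun x y h => by rw [preBracket_swap, h, neg_zero]) (lieRel_le_ker_preBracket P)

theorem bracket_cls (m n : ℤ) (a b : L) :
    bracket P (cls P m a) (cls P n b) = modeBracket P m n a b :=
  preBracket_single P m n a b

theorem bracket_swap (x y : LieQuot P) : bracket P y x = -bracket P x y := by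
  induction x using Submodule.Quotient.induction_on
  induction y using Submodule.Quotient.induction_on
  exact preBracket_swap P _ _

theorem bracket_self (x : LieQuot P) : bracket P x x = 0 := by
  have h : (2 : ℂ) • bracket P x x = 0 := by
    rw [two_smul]
    nth_rewrite 1 [bracket_swap]
    exact neg_add_cancel _
  exact (smul_eq_zero.1 h).resolve_left two_ne_zero

variable {P}

theorem bracket_cls_eq_sum (m n : ℤ) {a b : L} {N : ℕ} (h : ∀ j ≥ N, P.prod j a b = 0) :
    bracket P (cls P m a) (cls P n b) =
      ∑ j ∈ range N, intChoose m j • cls P (m + n - j) (P.prod j a b) := by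
  rw [bracket_cls, modeBracket_eq_sum m n h]

end Bracket

section Jacobi

variable {P : LieConformalAlgebra L}

theorem bracket_cls_bracket_cls (k m n : ℤ) {a b c : L} {N : ℕ}
    (h₁ : ∀ s ≥ N, P.prod s b c = 0) (h₂ : ∀ r s, N ≤ r + s → P.prod r a (P.prod s b c) = 0) :
    bracket P (cls P k a) (bracket P (cls P m b) (cls P n c)) =
      ∑ r ∈ range N, ∑ s ∈ range N,
        (intChoose k r * intChoose m s) •
          cls P (k + m + n - r - s) (P.prod r a (P.prod s b c)) := by
  rw [bracket_cls_eq_sum m n h₁, map_sum, sum_comm]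
  refine sum_congr rfl fun s _ => ?_
  rw [map_smul, bracket_cls_eq_sum (N := N) k _ fun r hr => h₂ r s (by omega), smul_sum]
  refine sum_congr rfl fun r _ => ?_
  rw [smul_smul, mul_comm, show k + (m + n - s) - r = k + m + n - r - s by ring]

theorem bracket_bracket_cls_cls (k m n : ℤ) {a b c : L} {N : ℕ}
    (h₁ : ∀ t ≥ N, P.prod t a b = 0) (h₂ : ∀ u t, N ≤ u + t → P.prod u (P.prod t a b) c = 0) :
    bracket P (bracket P (cls P k a) (cls P m b)) (cls P n c) =
      ∑ t ∈ range N, ∑ u ∈ range N,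
        (intChoose k t * intChoose (k + m - t) u) •
          cls P (k + m + n - t - u) (P.prod u (P.prod t a b) c) := by
  rw [bracket_cls_eq_sum k m h₁, map_sum, LinearMap.sum_apply]
  refine sum_congr rfl fun t _ => ?_
  rw [map_smul, LinearMap.smul_apply,
    bracket_cls_eq_sum (N := N) _ n fun u hu => h₂ u t (by omega), smul_sum]
  refine sum_congr rfl fun u _ => ?_
  rw [smul_smul, show k + m - t + n - u = k + m + n - t - u by ring]

theorem bracket_cls_jacobi (k m n : ℤ) (a b c : L) :
    bracket P (cls P k a) (bracket P (cls P m b) (cls P n c)) =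
      bracket P (bracket P (cls P k a) (cls P m b)) (cls P n c) +
        bracket P (cls P m b) (bracket P (cls P k a) (cls P n c)) := by
  obtain ⟨N, hab, hbc, hac, habc, hbac, habc'⟩ :=
    ((eventually_forall_ge_atTop.2 (P.eventually_prod_eq_zero a b)).and <|
      (eventually_forall_ge_atTop.2 (P.eventually_prod_eq_zero b c)).and <|
      (eventually_forall_ge_atTop.2 (P.eventually_prod_eq_zero a c)).and <|
      (P.eventually_prod_prod_eq_zero a b c).and <|
      (P.eventually_prod_prod_eq_zero b a c).and <|
      P.eventually_prod_prod_left_eq_zero a b c).exists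
  rw [bracket_cls_bracket_cls k m n hbc habc, bracket_cls_bracket_cls m k n hac hbac,
    bracket_bracket_cls_cls k m n hab habc', sum_comm (s := range N) (t := range N)
      (f := fun s r => (intChoose m s * intChoose k r) • _),
    ← sum_range_sum_range_sum_choose_intChoose_smul k m
      (g := fun t u => cls P (k + m + n - t - u) (P.prod u (P.prod t a b) c))
      fun t u h => by rw [habc' u t (by omega), cls_zero]]
  -- Applied termwise, the conformal Jacobi identity splits each term on the left into the
  -- corresponding terms of the two double sums on the right.
  simp only [← sum_add_distrib]
  refine sum_congr rfl fun r _ => sum_congr rfl fun s _ => ?_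
  rw [P.jacobi, cls_add, cls_sum, smul_add, smul_sum]
  congr 1
  · refine sum_congr rfl fun i hi => ?_
    have hir : i ≤ r := Nat.lt_succ_iff.1 (mem_range.1 hi)
    rw [cls_smul, smul_smul]
    congr 2
    push_cast [hir]
    ring
  · rw [mul_comm, show m + k + n - s - r = k + m + n - r - s by ring]

variable (P) in
theorem bracket_jacobi (x y z : LieQuot P) :
    bracket P x (bracket P y z) = bracket P (bracket P x y) z + bracket P y (bracket P x z) := by
  induction x using LieQuot.induction_on with
  | add x x' hx hx' => simp only [map_add, LinearMap.add_apply, hx, hx']; abel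
  | cls k a =>
    induction y using LieQuot.induction_on with
    | add y y' hy hy' => simp only [map_add, LinearMap.add_apply, hy, hy']; abel
    | cls m b =>
      induction z using LieQuot.induction_on with
      | add z z' hz hz' => simp only [map_add, hz, hz']; abel
      | cls n c => exact bracket_cls_jacobi k m n a b c

end Jacobi

theorem stmt_18 (P : LieConformalAlgebra L) :
    ∃ Br : LieQuot P →ₗ[ℂ] LieQuot P →ₗ[ℂ] LieQuot P,
      (∀ x : LieQuot P, Br x x = 0) ∧
      (∀ x y z : LieQuot P, Br x (Br y z) = Br (Br x y) z + Br y (Br x z)) ∧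
      (∀ (m n : ℤ) (a b : L) (N : ℕ), (∀ j ≥ N, P.prod j a b = 0) →
        Br (cls P m a) (cls P n b) =
          ∑ j ∈ Finset.range N, intChoose m j • cls P (m + n - (j : ℤ)) (P.prod j a b)) :=
  ⟨bracket P, bracket_self P, bracket_jacobi P, fun m n _ _ _ h => bracket_cls_eq_sum m n h⟩
end
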